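/- Let c ∈ (0,1) and let P ∈ SO(3) be a rotation about the z-axis L. Then the attractor A(c,P) is connected if and only if A₁ ∩ A₃ ≠ ∅, where A_i = f_i(A(c,P)). Moreover, the four conditions A₁∩A₃ ≠ ∅, A₁∩A₄ ≠ ∅, A₂∩A₄ ≠ ∅, A₂∩A₃ ≠ ∅ are pairwise equivalent. -/

import Mathlib

/- STATEMENT 18: Let c ∈ (0,1) and let P ∈ SO(3) be a rotation about the z-axis (i.e. P
fixes (0,0,1)). Then the attractor A(c,P) is connected iff A₁ ∩ A₃ ≠ ∅, and the four
conditions A₁∩A₃ ≠ ∅, A₁∩A₄ ≠ ∅, A₂∩A₄ ≠ ∅, A₂∩A₃ ≠ ∅ are pairwise equivalent.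
(0-based indices: A₁ = piece 0, …, A₄ = piece 3.) -/
noncomputable section
open Matrix

abbrev E3 := EuclideanSpace ℝ (Fin 3)

def vtx : Fin 4 → E3 :=
  ![!₂[1, -1, 1], !₂[-1, 1, 1], !₂[-1, -1, -1], !₂[1, 1, -1]]

/-- The other four vertices of the cube `[-1,1]³`. -/
def vtx' : Fin 4 → E3 :=
  ![!₂[1, 1, 1], !₂[-1, -1, 1], !₂[1, -1, -1], !₂[-1, 1, -1]]

/-- The cube `C₀ = [-1,1]³`. -/
def C0 : Set E3 := {x | ∀ i, x i ∈ Set.Icc (-1 : ℝ) 1}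

/-- The regular tetrahedron `T₀` with vertices `v₁, v₂, v₃, v₄`. -/
def T0 : Set E3 := convexHull ℝ (Set.range vtx)

/-- Membership in the hexahedral group `𝒫₆`: rotations preserving the cube `C₀`. -/
def memP6 (Q : Matrix (Fin 3) (Fin 3) ℝ) : Prop :=
  Q ∈ Matrix.specialOrthogonalGroup (Fin 3) ℝ ∧ Matrix.toEuclideanLin Q '' C0 = C0

/-- Membership in the tetrahedral group `𝒫₄`: rotations preserving the tetrahedron `T₀`. -/
def memP4 (Q : Matrix (Fin 3) (Fin 3) ℝ) : Prop :=
  Q ∈ Matrix.specialOrthogonalGroup (Fin 3) ℝ ∧ Matrix.toEuclideanLin Q '' T0 = T0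

def fmap (c : ℝ) (P : Matrix (Fin 3) (Fin 3) ℝ) (i : Fin 4) (x : E3) : E3 :=
  c • Matrix.toEuclideanLin P x + vtx i

def IsAttractor (c : ℝ) (P : Matrix (Fin 3) (Fin 3) ℝ) (A : Set E3) : Prop :=
  A.Nonempty ∧ IsCompact A ∧ A = ⋃ i : Fin 4, fmap c P i '' A

/-!
The rotoreflection `S = -R`, where `R` is the quarter turn about `L`, commutes with `P` and
permutes the vertices (`v₁ ↦ v₄ ↦ v₂ ↦ v₃ ↦ v₁`), so `S ∘ fᵢ = f_{σ i} ∘ S`. By uniqueness of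
the attractor `S(A) = A`, hence `S(Aᵢ ∩ Aⱼ) = A_{σ i} ∩ A_{σ j}`; this gives the three
equivalences. Hata's criterion then finishes: the pieces `A₁, A₂` meet `A₃, A₄` either in all
four pairs, and the intersection graph is the cycle `1 – 3 – 2 – 4 – 1`, or in none, and
`A₁ ∪ A₂`, `A₃ ∪ A₄` separate `A`.
-/

open Set Metric Relation Topology Filter Matrix
open scoped NNReal

section IteratedFunctionSystem

variable {X ι : Type*} [MetricSpace X] {f : ι → X → X} {K : ℝ≥0}

/- The point `x₀ = fᵢ x₁` of `E` farthest from `F` satisfies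
`d(x₀, F) ≤ K d(x₁, F) ≤ K d(x₀, F)`, so `E` lies in the closed set `F`. -/
theorem subset_of_subset_iUnion_image_of_iUnion_image_subset (hK : K < 1)
    (hf : ∀ i, LipschitzWith K (f i)) {E F : Set X} (hEc : IsCompact E)
    (hE : E ⊆ ⋃ i, f i '' E) (hFc : IsCompact F) (hFne : F.Nonempty)
    (hF : ⋃ i, f i '' F ⊆ F) : E ⊆ F := by
  rcases E.eq_empty_or_nonempty with rfl | hEne
  · exact empty_subset F
  obtain ⟨x₀, hx₀, hmax⟩ := hEc.exists_isMaxOn hEne (continuous_infDist_pt F).continuousOn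
  obtain ⟨i, x₁, hx₁, rfl⟩ : ∃ i, ∃ x₁ ∈ E, f i x₁ = x₀ := by simpa using hE hx₀
  obtain ⟨y, hy, hdist⟩ := hFc.exists_infDist_eq_dist hFne x₁
  have hcontract : infDist (f i x₁) F ≤ K * infDist (f i x₁) F :=
    calc infDist (f i x₁) F ≤ dist (f i x₁) (f i y) :=
          infDist_le_dist_of_mem (hF (mem_iUnion_of_mem i (mem_image_of_mem _ hy)))
      _ ≤ K * dist x₁ y := (hf i).dist_le_mul x₁ y
      _ = K * infDist x₁ F := by rw [hdist]
      _ ≤ K * infDist (f i x₁) F := by gcongr; exact hmax hx₁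
  have hzero : infDist (f i x₁) F = 0 := by
    have : (K : ℝ) < 1 := hK
    nlinarith [infDist_nonneg (x := f i x₁) (s := F)]
  intro x hx
  rw [hFc.isClosed.mem_iff_infDist_zero hFne]
  exact le_antisymm (hzero ▸ hmax hx) infDist_nonneg

theorem eq_of_eq_iUnion_image (hK : K < 1) (hf : ∀ i, LipschitzWith K (f i)) {E F : Set X}
    (hEc : IsCompact E) (hEne : E.Nonempty) (hE : E = ⋃ i, f i '' E)
    (hFc : IsCompact F) (hFne : F.Nonempty) (hF : F = ⋃ i, f i '' F) : E = F :=
  (subset_of_subset_iUnion_image_of_iUnion_image_subset hK hf hEc hE.le hFc hFne hF.ge).antisymm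
    (subset_of_subset_iUnion_image_of_iUnion_image_subset hK hf hFc hF.le hEc hEne hE.ge)

variable {A : Set X} {T : X → X} {σ : ι → ι}

theorem image_eq_of_semiconj (hK : K < 1) (hf : ∀ i, LipschitzWith K (f i))
    (hAc : IsCompact A) (hAne : A.Nonempty) (hA : A = ⋃ i, f i '' A) (hT : Continuous T)
    (hσ : σ.Surjective) (hTf : ∀ i x, T (f i x) = f (σ i) (T x)) : T '' A = A := by
  refine eq_of_eq_iUnion_image hK hf (hAc.image hT) (hAne.image T) ?_ hAc hAne hA
  calc T '' A = ⋃ i, f (σ i) '' (T '' A) := by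
        conv_lhs => rw [hA]
        simp only [image_iUnion, image_image, hTf]
    _ = ⋃ i, f i '' (T '' A) := hσ.iUnion_comp fun j => f j '' (T '' A)

theorem inter_image_nonempty_iff_of_semiconj (hK : K < 1) (hf : ∀ i, LipschitzWith K (f i))
    (hAc : IsCompact A) (hAne : A.Nonempty) (hA : A = ⋃ i, f i '' A) (hT : Continuous T)
    (hTinj : T.Injective) (hσ : σ.Surjective) (hTf : ∀ i x, T (f i x) = f (σ i) (T x))
    (i j : ι) :
    (f i '' A ∩ f j '' A).Nonempty ↔ (f (σ i) '' A ∩ f (σ j) '' A).Nonempty := by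
  have hpiece : ∀ i, T '' (f i '' A) = f (σ i) '' A := fun i => by
    conv_rhs => rw [← image_eq_of_semiconj hK hf hAc hAne hA hT hσ hTf]
    simp only [image_image, hTf]
  rw [← image_nonempty (f := T), image_inter hTinj, hpiece, hpiece]

end IteratedFunctionSystem

section ChainConnected

variable {X : Type*} [MetricSpace X]

def ChainConnected (A : Set X) (ε : ℝ) : Prop :=
  ∀ x ∈ A, ∀ y ∈ A, ReflTransGen (fun a b => b ∈ A ∧ dist a b ≤ ε) x y

theorem ChainConnected.mono {A : Set X} {ε ε' : ℝ} (h : ChainConnected A ε) (hε : ε ≤ ε') :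
    ChainConnected A ε' := fun x hx y hy =>
  ReflTransGen.mono (fun _ _ hab => ⟨hab.1, hab.2.trans hε⟩) _ _ (h x hx y hy)

theorem chainConnected_diam {A : Set X} (hA : Bornology.IsBounded A) :
    ChainConnected A (diam A) := fun _ hx _ hy =>
  .single ⟨hy, dist_le_diam_of_mem hA hx hy⟩

theorem ChainConnected.image {A B : Set X} {ε : ℝ} {K : ℝ≥0} {g : X → X}
    (hg : LipschitzWith K g) (hAB : MapsTo g A B) (h : ChainConnected A ε) :
    ∀ x ∈ A, ∀ y ∈ A, ReflTransGen (fun a b => b ∈ B ∧ dist a b ≤ K * ε) (g x) (g y) :=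
  fun x hx y hy => ReflTransGen.lift g
    (fun _ _ hab => ⟨hAB hab.1, (hg.dist_le_mul _ _).trans (by gcongr; exact hab.2)⟩) _ _
    (h x hx y hy)

/- A chain from `A ∩ U` to `A ∩ V` with steps shorter than the distance between these two
compact sets cannot leave `A ∩ U`. -/
theorem IsCompact.isPreconnected_of_chainConnected {A : Set X} (hA : IsCompact A)
    (h : ∀ ε > 0, ChainConnected A ε) : IsPreconnected A := by
  rw [isPreconnected_closed_iff]
  rintro U V hU hV hAUV ⟨y, hyA, hyU⟩ ⟨x, hxA, hxV⟩
  by_contra hdisj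
  have hsep : Disjoint (A ∩ U) (A ∩ V) :=
    disjoint_left.mpr fun z hzU hzV => hdisj ⟨z, hzU.1, hzU.2, hzV.2⟩
  obtain ⟨r, hr, hfar⟩ :=
    exists_pos_forall_lt_edist (hA.inter_right hU) (hA.isClosed.inter hV) hsep
  have hstay : ∀ z, ReflTransGen (fun a b => b ∈ A ∧ dist a b ≤ r) y z → z ∈ A ∩ U := by
    intro z hz
    induction hz with
    | refl => exact ⟨hyA, hyU⟩
    | tail _ hbz hb =>
      refine ⟨hbz.1, (hAUV hbz.1).resolve_right fun hzV => ?_⟩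
      have := hfar _ hb _ ⟨hbz.1, hzV⟩
      rw [edist_dist, ENNReal.coe_lt_ofReal] at this
      linarith [hbz.2]
  exact hsep.le_bot ⟨hstay x (h r hr y hyA x hxA), hxA, hxV⟩

end ChainConnected

section HataCriterion

variable {X ι : Type*} [MetricSpace X] {f : ι → X → X} {K : ℝ≥0} {A : Set X}

theorem ChainConnected.mul_of_eq_iUnion_image (hf : ∀ i, LipschitzWith K (f i))
    (hA : A = ⋃ i, f i '' A)
    (hG : ∀ i j, ReflTransGen (fun i j => (f i '' A ∩ f j '' A).Nonempty) i j) {ε : ℝ}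
    (h : ChainConnected A ε) : ChainConnected A (K * ε) := by
  have hmaps : ∀ i, MapsTo (f i) A A := fun i x hx => by
    rw [hA]; exact mem_iUnion_of_mem i (mem_image_of_mem _ hx)
  have hpiece := fun i => h.image (hf i) (hmaps i)
  intro x hx y hy
  rw [hA, mem_iUnion] at hx hy
  obtain ⟨i, x, hx, rfl⟩ := hx
  obtain ⟨j, y, hy, rfl⟩ := hy
  induction hG i j generalizing y with
  | refl => exact hpiece i x hx y hy
  | tail _ hjk ih =>
    obtain ⟨_, ⟨a, ha, rfl⟩, b, hb, hab⟩ := hjk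
    exact (ih a ha).trans (hab ▸ hpiece _ b hb y hy)

theorem isConnected_of_reflTransGen_inter_nonempty (hK : K < 1)
    (hf : ∀ i, LipschitzWith K (f i)) (hAc : IsCompact A) (hAne : A.Nonempty)
    (hA : A = ⋃ i, f i '' A) (i₀ : ι)
    (hG : ∀ i, ReflTransGen (fun i j => (f i '' A ∩ f j '' A).Nonempty) i₀ i) :
    IsConnected A := by
  have hG' : ∀ i j, ReflTransGen (fun i j => (f i '' A ∩ f j '' A).Nonempty) i j :=
    fun i j => (ReflTransGen.mono (fun _ _ h => by rwa [inter_comm]) _ _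
      (hG i).swap).trans (hG j)
  have hiter : ∀ n : ℕ, ChainConnected A (K ^ n * diam A) := by
    intro n
    induction n with
    | zero => simpa using chainConnected_diam hAc.isBounded
    | succ n ih => simpa [pow_succ', mul_assoc] using ih.mul_of_eq_iUnion_image hf hA hG'
  refine ⟨hAne, hAc.isPreconnected_of_chainConnected fun ε hε => ?_⟩
  have hlim : Tendsto (fun n : ℕ => (K : ℝ) ^ n * diam A) atTop (𝓝 0) := by
    simpa using (tendsto_pow_atTop_nhds_zero_of_lt_one K.coe_nonneg hK).mul_const (diam A)
  obtain ⟨n, hn⟩ := (hlim.eventually (gt_mem_nhds hε)).exists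
  exact (hiter n).mono hn.le

theorem IsPreconnected.exists_inter_nonempty_of_isClosed [Finite ι] {s : ι → Set X}
    (hs : ∀ i, IsClosed (s i)) (hconn : IsPreconnected (⋃ i, s i)) {S : Set ι}
    (hS : ∃ i ∈ S, (s i).Nonempty) (hSc : ∃ j ∉ S, (s j).Nonempty) :
    ∃ i ∈ S, ∃ j ∉ S, (s i ∩ s j).Nonempty := by
  have hclosed : ∀ T : Set ι, IsClosed (⋃ i ∈ T, s i) := fun T =>
    T.toFinite.isClosed_biUnion fun i _ => hs i
  have hcover : ⋃ i, s i ⊆ (⋃ i ∈ S, s i) ∪ ⋃ i ∈ Sᶜ, s i := by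
    rw [← biUnion_union, union_compl_self, biUnion_univ]
  obtain ⟨i₀, hi₀, x, hx⟩ := hS
  obtain ⟨j₀, hj₀, y, hy⟩ := hSc
  obtain ⟨z, -, hzS, hzSc⟩ := isPreconnected_closed_iff.mp hconn _ _ (hclosed S) (hclosed Sᶜ)
    hcover ⟨x, mem_iUnion_of_mem i₀ hx, mem_biUnion hi₀ hx⟩
    ⟨y, mem_iUnion_of_mem j₀ hy, mem_biUnion hj₀ hy⟩
  obtain ⟨i, hi, hzi⟩ := mem_iUnion₂.mp hzS
  obtain ⟨j, hj, hzj⟩ := mem_iUnion₂.mp hzSc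
  exact ⟨i, hi, j, hj, z, hzi, hzj⟩

end HataCriterion

theorem isometry_toEuclideanLin {𝕜 n : Type*} [RCLike 𝕜] [Fintype n] [DecidableEq n]
    {U : Matrix n n 𝕜} (hU : U ∈ unitaryGroup n 𝕜) : Isometry (toEuclideanLin U) :=
  AddMonoidHomClass.isometry_of_norm _ fun v =>
    ContinuousLinearMap.norm_map_of_mem_unitary
      (Unitary.map_mem (toEuclideanCLM (n := n) (𝕜 := 𝕜)) hU) v

theorem exists_eq_of_mem_specialOrthogonalGroup_of_fix {P : Matrix (Fin 3) (Fin 3) ℝ}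
    (hP : P ∈ specialOrthogonalGroup (Fin 3) ℝ)
    (hPz : toEuclideanLin P (EuclideanSpace.single 2 1) = EuclideanSpace.single 2 1) :
    ∃ a b : ℝ, P = !![a, -b, 0; b, a, 0; 0, 0, 1] := by
  obtain ⟨hPo, hdet⟩ := mem_specialUnitaryGroup_iff.mp hP
  have hcol : ∀ i, P i 2 = if i = 2 then 1 else 0 := fun i => by
    simpa [toLpLin_apply, mulVec, dotProduct, Pi.single_apply] using congrArg (· i) hPz
  have hPPt := mem_unitaryGroup_iff.mp hPo
  have hPtP := mem_unitaryGroup_iff'.mp hPo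
  have hrow : P 2 0 * P 2 0 + P 2 1 * P 2 1 = 0 := by
    simpa [mul_apply, Fin.sum_univ_three, hcol] using congrFun (congrFun hPPt 2) 2
  have h20 : P 2 0 = 0 := by nlinarith
  have h21 : P 2 1 = 0 := by nlinarith
  have h00 : P 0 0 * P 0 0 + P 1 0 * P 1 0 = 1 := by
    simpa [mul_apply, Fin.sum_univ_three, h20] using congrFun (congrFun hPtP 0) 0
  have h01 : P 0 0 * P 0 1 + P 1 0 * P 1 1 = 0 := by
    simpa [mul_apply, Fin.sum_univ_three, h20] using congrFun (congrFun hPtP 0) 1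
  have hdet' : P 0 0 * P 1 1 - P 0 1 * P 1 0 = 1 := by
    simpa [det_fin_three, hcol] using hdet
  have h11 : P 1 1 = P 0 0 := by linear_combination P 0 0 * hdet' - P 1 1 * h00 + P 1 0 * h01
  have h01' : P 0 1 = -P 1 0 := by
    linear_combination -(P 0 1) * h00 + P 0 0 * h01 - P 1 0 * hdet'
  refine ⟨P 0 0, P 1 0, ?_⟩
  ext i j
  fin_cases i <;> fin_cases j <;> simp [hcol, h20, h21, h11, h01']

def quarterRotoreflection : Matrix (Fin 3) (Fin 3) ℝ := !![0, -1, 0; 1, 0, 0; 0, 0, -1]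

theorem quarterRotoreflection_mem_orthogonalGroup :
    quarterRotoreflection ∈ orthogonalGroup (Fin 3) ℝ := by
  rw [mem_orthogonalGroup_iff]
  ext i j
  fin_cases i <;> fin_cases j <;> simp [quarterRotoreflection, mul_apply, Fin.sum_univ_three]

theorem quarterRotoreflection_commute {P : Matrix (Fin 3) (Fin 3) ℝ}
    (hP : P ∈ specialOrthogonalGroup (Fin 3) ℝ)
    (hPz : toEuclideanLin P (EuclideanSpace.single 2 1) = EuclideanSpace.single 2 1) :
    Commute quarterRotoreflection P := by
  obtain ⟨a, b, rfl⟩ := exists_eq_of_mem_specialOrthogonalGroup_of_fix hP hPz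
  ext i j
  fin_cases i <;> fin_cases j <;> simp [quarterRotoreflection, mul_apply, Fin.sum_univ_three]

theorem quarterRotoreflection_vtx (i : Fin 4) :
    toEuclideanLin quarterRotoreflection (vtx i) = vtx (![3, 2, 0, 1] i) := by
  ext k
  fin_cases i <;> fin_cases k <;> simp [quarterRotoreflection, vtx, toLpLin_apply]

theorem quarterRotoreflection_fmap {c : ℝ} {P : Matrix (Fin 3) (Fin 3) ℝ}
    (hSP : Commute quarterRotoreflection P) (i : Fin 4) (x : E3) :
    toEuclideanLin quarterRotoreflection (fmap c P i x) =
      fmap c P (![3, 2, 0, 1] i) (toEuclideanLin quarterRotoreflection x) := by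
  have hcomm := congrArg (fun M => toEuclideanLin M x) hSP.eq
  simp only [toLpLin_mul_same, LinearMap.comp_apply] at hcomm
  rw [fmap, fmap, map_add, map_smul, hcomm, quarterRotoreflection_vtx]

theorem lipschitzWith_fmap {c : ℝ} (hc : 0 ≤ c) {P : Matrix (Fin 3) (Fin 3) ℝ}
    (hP : P ∈ orthogonalGroup (Fin 3) ℝ) (i : Fin 4) :
    LipschitzWith c.toNNReal (fmap c P i) :=
  LipschitzWith.of_dist_le_mul fun x y => le_of_eq <| by
    rw [Real.coe_toNNReal c hc, fmap, fmap, dist_add_right, dist_smul₀,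
      (isometry_toEuclideanLin hP).dist_eq, Real.norm_of_nonneg hc]

theorem connected_iff_pieces_meet (c : ℝ) (hc : c ∈ Set.Ioo (0 : ℝ) 1)
    (P : Matrix (Fin 3) (Fin 3) ℝ)
    (hP : P ∈ Matrix.specialOrthogonalGroup (Fin 3) ℝ)
    (hPz : Matrix.toEuclideanLin P (EuclideanSpace.single (2 : Fin 3) (1 : ℝ)) =
      EuclideanSpace.single (2 : Fin 3) (1 : ℝ))
    (A : Set E3) (hA : IsAttractor c P A) :
    (IsConnected A ↔ (fmap c P 0 '' A ∩ fmap c P 2 '' A).Nonempty) ∧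
    ((fmap c P 0 '' A ∩ fmap c P 2 '' A).Nonempty ↔
      (fmap c P 0 '' A ∩ fmap c P 3 '' A).Nonempty) ∧
    ((fmap c P 0 '' A ∩ fmap c P 3 '' A).Nonempty ↔
      (fmap c P 1 '' A ∩ fmap c P 3 '' A).Nonempty) ∧
    ((fmap c P 1 '' A ∩ fmap c P 3 '' A).Nonempty ↔
      (fmap c P 1 '' A ∩ fmap c P 2 '' A).Nonempty) := by
  obtain ⟨hc0, hc1⟩ := hc
  obtain ⟨hAne, hAc, hA⟩ := hA
  have hK : c.toNNReal < 1 := Real.toNNReal_lt_one.mpr hc1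
  have hf := lipschitzWith_fmap hc0.le (mem_specialUnitaryGroup_iff.mp hP).1
  have hS := isometry_toEuclideanLin quarterRotoreflection_mem_orthogonalGroup
  have hsymm := inter_image_nonempty_iff_of_semiconj hK hf hAc hAne hA hS.continuous
    hS.injective (by decide) (quarterRotoreflection_fmap (quarterRotoreflection_commute hP hPz))
  have e₁ := (hsymm 0 2).trans (by rw [inter_comm])
  have e₂ := (hsymm 0 3).trans (by rw [inter_comm])
  have e₃ := (hsymm 1 3).trans (by rw [inter_comm])
  refine ⟨⟨fun hconn => ?_, fun h₀₂ => ?_⟩, e₁, e₂, e₃⟩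
  · obtain ⟨i, hi, j, hj, hij⟩ :=
      (hA ▸ hconn.isPreconnected).exists_inter_nonempty_of_isClosed
        (fun i => (hAc.image (hf i).continuous).isClosed) (S := {0, 1})
        ⟨0, by simp, hAne.image _⟩ ⟨2, by decide, hAne.image _⟩
    obtain rfl | rfl : j = 2 ∨ j = 3 := by fin_cases j <;> simp at hj ⊢
    all_goals rcases hi with rfl | rfl
    · exact hij
    · exact e₁.mpr (e₂.mpr (e₃.mpr hij))
    · exact e₁.mpr hij
    · exact e₁.mpr (e₂.mpr hij)
  · have h₂₁ : (fmap c P 2 '' A ∩ fmap c P 1 '' A).Nonempty := by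
      rw [inter_comm]; exact e₃.mp (e₂.mp (e₁.mp h₀₂))
    refine isConnected_of_reflTransGen_inter_nonempty hK hf hAc hAne hA 0 fun i => ?_
    fin_cases i
    exacts [.refl, (ReflTransGen.single h₀₂).tail h₂₁, ReflTransGen.single h₀₂,
      ReflTransGen.single (e₁.mp h₀₂)]
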